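/- arXiv:2403.12458 — 5 statements merged into one kernel-verified Lean document; each statement's English description precedes it below -/
import Mathlib

section
/- Let (Q, 𝔪, k) be a local Artinian ring with 𝔪³ = 0 whose Hilbert series is H_Q(t) = 1 + et + (e-1)t², where e is the minimal number of generators of 𝔪. Then for f ∈ Q, the pair (f, f) is an exact pair of zero divisors if and only if f is a Conca generator, i.e., f² = 0 and f𝔪 = 𝔪². -/
open IsLocalRing

/-- The length of a module, defined as the Krull dimension of its lattice of submodules. -/
noncomputable def moduleLength (Q M : Type) [CommRing Q] [AddCommGroup M] [Module Q M] : ℕ∞ :=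
  WithBot.unbotD 0 (Order.krullDim (Submodule Q M))

/-- The `n`-th coefficient of the Hilbert series of a local ring `Q`,
namely `dim_k (𝔪ⁿ/𝔪ⁿ⁺¹)`, computed as the length over `Q` of `𝔪ⁿ/𝔪ⁿ⁺¹`. -/
noncomputable def hilbCoeff (Q : Type) [CommRing Q] [IsLocalRing Q] (n : ℕ) : ℕ∞ :=
  moduleLength Q
    (↥(maximalIdeal Q ^ n) ⧸
      (Submodule.comap (maximalIdeal Q ^ n).subtype (maximalIdeal Q ^ (n + 1))))

/-!
Either side forces `f² = 0` and, because `𝔪³ = 0`, `f ∈ 𝔪 ∖ 𝔪²`. Multiplication by `f` then induces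
a linear map `g : 𝔪/𝔪² → 𝔪²/𝔪³` over the residue field, from a space of dimension `e` to one of
dimension `e - 1`, and the class of `f` is a nonzero vector of `ker g`. By rank–nullity, `ker g` is
the line it spans exactly when `g` is onto. Unwinding, the kernel condition says
`ann f ⊆ (f) + 𝔪²` and surjectivity says `f𝔪 = 𝔪²`; as `f𝔪 = 𝔪²` puts `𝔪²` inside `(f)`, the two
together give `ann f = (f)`.
-/

open Module Submodule

theorem moduleLength_eq_length (Q M : Type) [CommRing Q] [AddCommGroup M] [Module Q M] :
    moduleLength Q M = Module.length Q M := by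
  rw [moduleLength, ← Module.coe_length, WithBot.unbotD_coe]

theorem LinearMap.ker_le_span_singleton_iff_surjective {K V W : Type*} [DivisionRing K]
    [AddCommGroup V] [Module K V] [AddCommGroup W] [Module K W]
    [FiniteDimensional K V] [FiniteDimensional K W]
    (hdim : finrank K W = finrank K V - 1) (g : V →ₗ[K] W) {v : V} (hv : v ≠ 0)
    (hgv : g v = 0) :
    LinearMap.ker g ≤ span K {v} ↔ Function.Surjective g := by
  have hrank := g.finrank_range_add_finrank_ker
  have hspan : finrank K (span K {v}) = 1 := finrank_span_singleton hv
  have hspan_le : span K {v} ≤ LinearMap.ker g := by simpa [span_le] using hgv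
  have : Nontrivial V := ⟨⟨v, 0, hv⟩⟩
  have hVpos : 0 < finrank K V := finrank_pos
  rw [← LinearMap.range_eq_top]
  constructor
  · intro hker
    have := Submodule.finrank_mono hker
    exact eq_top_of_finrank_eq (le_antisymm (Submodule.finrank_le _) (by omega))
  · intro hrange
    rw [hrange, finrank_top] at hrank
    exact (eq_of_le_of_finrank_eq hspan_le (by omega)).ge

namespace Ideal

variable {R : Type*} [CommRing R] (I : Ideal R)

abbrev GradedPiece (n : ℕ) : Type _ :=
  ↥(I ^ n) ⧸ Submodule.comap (I ^ n).subtype (I ^ (n + 1))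

namespace GradedPiece

theorem isTorsionBySet (n : ℕ) : Module.IsTorsionBySet R (I.GradedPiece n) I := by
  rw [isTorsionBySet_quotient_iff]
  intro x r hr
  simpa [pow_succ'] using mul_mem_mul hr x.2

variable {I}

def mulLeft {f : R} (hf : f ∈ I) (n : ℕ) : I.GradedPiece n →ₗ[R] I.GradedPiece (n + 1) :=
  mapQ _ _ ((LinearMap.mulLeft R f).restrict fun x hx ↦ pow_succ' I n ▸ mul_mem_mul hf hx)
    fun x hx ↦ by simpa [pow_succ' I (n + 1)] using mul_mem_mul hf hx

theorem mulLeft_mk {f : R} (hf : f ∈ I) {n : ℕ} (x : ↥(I ^ n)) :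
    mulLeft hf n (Submodule.Quotient.mk x) =
      Submodule.Quotient.mk ⟨f * x, pow_succ' I n ▸ mul_mem_mul hf x.2⟩ :=
  rfl

theorem mulLeft_mk_eq_zero_iff {f : R} (hf : f ∈ I) {n : ℕ} (x : ↥(I ^ n)) :
    mulLeft hf n (Submodule.Quotient.mk x) = 0 ↔ f * x ∈ I ^ (n + 2) :=
  Submodule.Quotient.mk_eq_zero _

theorem surjective_mulLeft_iff {f : R} (hf : f ∈ I) (n : ℕ) :
    Function.Surjective (mulLeft hf n) ↔ I ^ (n + 1) ≤ span {f} * I ^ n ⊔ I ^ (n + 2) := by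
  constructor
  · intro hsurj w hw
    obtain ⟨y, hy⟩ := hsurj (Submodule.Quotient.mk ⟨w, hw⟩)
    obtain ⟨x, rfl⟩ := Submodule.Quotient.mk_surjective _ y
    rw [mulLeft_mk, Submodule.Quotient.eq] at hy
    replace hy : f * x - w ∈ I ^ (n + 2) := hy
    have hfx : f * x ∈ span {f} * I ^ n := mul_mem_mul (mem_span_singleton_self f) x.2
    simpa using sub_mem (mem_sup_left hfx) (mem_sup_right hy)
  · intro hle y
    obtain ⟨⟨w, hw⟩, rfl⟩ := Submodule.Quotient.mk_surjective _ y
    obtain ⟨a, ha, b, hb, rfl⟩ := mem_sup.mp (hle hw)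
    obtain ⟨z, hz, rfl⟩ := mem_span_singleton_mul.mp ha
    refine ⟨Submodule.Quotient.mk ⟨z, hz⟩, ?_⟩
    rw [mulLeft_mk, Submodule.Quotient.eq]
    simpa using neg_mem hb

end GradedPiece

end Ideal

namespace IsLocalRing

variable {Q : Type*} [CommRing Q] [IsLocalRing Q]

theorem algebraMap_residueField_surjective :
    Function.Surjective (algebraMap Q (ResidueField Q)) :=
  Ideal.Quotient.mk_surjective

theorem mem_maximalIdeal_of_mul_eq_zero {x y : Q} (h : x * y = 0) (hy : y ≠ 0) :
    x ∈ maximalIdeal Q := by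
  by_contra hx
  exact hy ((notMem_maximalIdeal.mp hx).mul_right_eq_zero.mp h)

theorem span_singleton_mul_maximalIdeal_le_sq {f : Q} (hf : f ∈ maximalIdeal Q) :
    Ideal.span {f} * maximalIdeal Q ≤ maximalIdeal Q ^ 2 :=
  sq (maximalIdeal Q) ▸ Ideal.mul_mono_left ((Ideal.span_singleton_le_iff_mem _).mpr hf)

theorem notMem_maximalIdeal_sq_of_span_singleton_mul_eq (h3 : maximalIdeal Q ^ 3 = ⊥) {f : Q}
    (hf0 : f ≠ 0) (hm : Ideal.span {f} * maximalIdeal Q = maximalIdeal Q ^ 2) :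
    f ∉ maximalIdeal Q ^ 2 := by
  intro hf2
  have hsq : maximalIdeal Q ^ 2 ≤ ⊥ :=
    calc maximalIdeal Q ^ 2 = Ideal.span {f} * maximalIdeal Q := hm.symm
      _ ≤ maximalIdeal Q ^ 2 * maximalIdeal Q :=
        Ideal.mul_mono_left ((Ideal.span_singleton_le_iff_mem _).mpr hf2)
      _ = ⊥ := by rw [← pow_succ, h3]
  exact hf0 (by simpa using hsq hf2)

theorem notMem_maximalIdeal_sq_of_annihilator_eq (h3 : maximalIdeal Q ^ 3 = ⊥) {f : Q}
    (hf0 : f ≠ 0) (hann : (Ideal.span {f}).annihilator = Ideal.span {f}) :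
    f ∉ maximalIdeal Q ^ 2 := by
  intro hf2
  have hle : maximalIdeal Q ≤ maximalIdeal Q ^ 2 := fun x hx ↦ by
    have hxf : x * f ∈ maximalIdeal Q ^ 3 :=
      pow_succ' (maximalIdeal Q) 2 ▸ Ideal.mul_mem_mul hx hf2
    rw [h3, Submodule.mem_bot, ← smul_eq_mul, ← mem_annihilator_span_singleton, hann] at hxf
    exact (Ideal.span_singleton_le_iff_mem _).mpr hf2 hxf
  have hsq : maximalIdeal Q ^ 2 ≤ ⊥ :=
    calc maximalIdeal Q ^ 2 = maximalIdeal Q * maximalIdeal Q := sq _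
      _ ≤ maximalIdeal Q * maximalIdeal Q ^ 2 := Ideal.mul_mono_right hle
      _ = ⊥ := by rw [← pow_succ', h3]
  exact hf0 (by simpa using hsq hf2)

end IsLocalRing

namespace Ideal.GradedPiece

variable {Q : Type*} [CommRing Q] [IsLocalRing Q]

noncomputable instance (n : ℕ) :
    Module (IsLocalRing.ResidueField Q) ((maximalIdeal Q).GradedPiece n) :=
  (isTorsionBySet _ n).module

instance (n : ℕ) : IsScalarTower Q (IsLocalRing.ResidueField Q) ((maximalIdeal Q).GradedPiece n) :=
  (isTorsionBySet _ n).isScalarTower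

theorem mk_mem_span_singleton_mk_iff {n : ℕ} (x y : ↥(maximalIdeal Q ^ n)) :
    Submodule.Quotient.mk x ∈
        Submodule.span (IsLocalRing.ResidueField Q)
          {(Submodule.Quotient.mk y : (maximalIdeal Q).GradedPiece n)} ↔
      (x : Q) ∈ Ideal.span {(y : Q)} ⊔ maximalIdeal Q ^ (n + 1) := by
  rw [Submodule.mem_span_singleton, IsLocalRing.algebraMap_residueField_surjective.exists]
  simp_rw [algebraMap_smul, ← Submodule.Quotient.mk_smul, Submodule.Quotient.eq]
  simp only [Submodule.mem_comap, Submodule.coe_subtype, AddSubgroupClass.coe_sub,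
    SetLike.val_smul, smul_eq_mul, Submodule.mem_sup, Ideal.mem_span_singleton']
  constructor
  · rintro ⟨a, ha⟩
    exact ⟨a * y, ⟨a, rfl⟩, -(a * y - x), neg_mem ha, by ring⟩
  · rintro ⟨_, ⟨a, rfl⟩, z, hz, hx⟩
    exact ⟨a, by simpa [← hx] using neg_mem hz⟩

theorem ker_mulLeft_le_span_iff (h3 : maximalIdeal Q ^ 3 = ⊥) {f : Q}
    (hf : f ∈ maximalIdeal Q) (hf0 : f ≠ 0) :
    LinearMap.ker ((mulLeft hf 1).extendScalarsOfSurjective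
        IsLocalRing.algebraMap_residueField_surjective) ≤
        Submodule.span (IsLocalRing.ResidueField Q)
          {Submodule.Quotient.mk ⟨f, by rwa [pow_one]⟩} ↔
      (Ideal.span {f}).annihilator ≤ Ideal.span {f} ⊔ maximalIdeal Q ^ 2 := by
  rw [SetLike.le_def, (Submodule.Quotient.mk_surjective _).forall]
  simp only [LinearMap.mem_ker, LinearMap.extendScalarsOfSurjective_apply, mulLeft_mk_eq_zero_iff,
    mk_mem_span_singleton_mk_iff, Nat.reduceAdd, h3, Submodule.mem_bot, Subtype.forall,
    mul_comm f]
  constructor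
  · intro h x hx
    rw [Submodule.mem_annihilator_span_singleton, smul_eq_mul] at hx
    exact h x (by simpa using IsLocalRing.mem_maximalIdeal_of_mul_eq_zero hx hf0) hx
  · intro h x _ hx
    exact h (by rwa [Submodule.mem_annihilator_span_singleton])

end Ideal.GradedPiece

theorem hilbCoeff_eq_toENat_rank (Q : Type) [CommRing Q] [IsLocalRing Q] (n : ℕ) :
    hilbCoeff Q n = (Module.rank (ResidueField Q) ((maximalIdeal Q).GradedPiece n)).toENat := by
  rw [hilbCoeff, moduleLength_eq_length,
    Module.length_eq_of_surjective algebraMap_residueField_surjective, Module.length_eq_rank]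

theorem rank_gradedPiece_eq_of_hilbCoeff_eq {Q : Type} [CommRing Q] [IsLocalRing Q]
    {n m : ℕ} (h : hilbCoeff Q n = m) :
    Module.rank (ResidueField Q) ((maximalIdeal Q).GradedPiece n) = m :=
  Cardinal.toENat_eq_natCast.mp ((hilbCoeff_eq_toENat_rank Q n).symm.trans h)

namespace IsLocalRing

open Ideal.GradedPiece

variable {Q : Type*} [CommRing Q] [IsLocalRing Q] (h3 : maximalIdeal Q ^ 3 = ⊥)
  [FiniteDimensional (ResidueField Q) ((maximalIdeal Q).GradedPiece 1)]
  [FiniteDimensional (ResidueField Q) ((maximalIdeal Q).GradedPiece 2)]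
  (hdim : finrank (ResidueField Q) ((maximalIdeal Q).GradedPiece 2) =
    finrank (ResidueField Q) ((maximalIdeal Q).GradedPiece 1) - 1)
include h3 hdim

theorem annihilator_le_span_sup_sq_iff_sq_le_span_mul {f : Q} (hf : f ∈ maximalIdeal Q)
    (hf2 : f ∉ maximalIdeal Q ^ 2) (hff : f * f = 0) :
    (Ideal.span {f}).annihilator ≤ Ideal.span {f} ⊔ maximalIdeal Q ^ 2 ↔
      maximalIdeal Q ^ 2 ≤ Ideal.span {f} * maximalIdeal Q := by
  have hf0 : f ≠ 0 := by rintro rfl; exact hf2 (zero_mem _)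
  rw [← ker_mulLeft_le_span_iff h3 hf hf0,
    LinearMap.ker_le_span_singleton_iff_surjective hdim]
  · change Function.Surjective (mulLeft hf 1) ↔ _
    simp only [surjective_mulLeft_iff, Nat.reduceAdd, h3, sup_bot_eq, pow_one]
  · rwa [Ne, Submodule.Quotient.mk_eq_zero]
  · rw [LinearMap.extendScalarsOfSurjective_apply, mulLeft_mk_eq_zero_iff]
    simp [hff]

theorem annihilator_span_singleton_eq_self_iff {f : Q} (hf0 : f ≠ 0) :
    (Ideal.span {f}).annihilator = Ideal.span {f} ↔
      f ^ 2 = 0 ∧ Ideal.span {f} * maximalIdeal Q = maximalIdeal Q ^ 2 := by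
  constructor
  · intro hann
    have hff : f * f = 0 := by
      rw [← smul_eq_mul, ← mem_annihilator_span_singleton, hann]
      exact Ideal.mem_span_singleton_self f
    have hf := mem_maximalIdeal_of_mul_eq_zero hff hf0
    refine ⟨sq f ▸ hff, (span_singleton_mul_maximalIdeal_le_sq hf).antisymm ?_⟩
    rw [← annihilator_le_span_sup_sq_iff_sq_le_span_mul h3 hdim hf
      (notMem_maximalIdeal_sq_of_annihilator_eq h3 hf0 hann) hff, hann]
    exact le_sup_left
  · rintro ⟨hsq, hm⟩
    have hff : f * f = 0 := sq f ▸ hsq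
    have hf := mem_maximalIdeal_of_mul_eq_zero hff hf0
    have hann := (annihilator_le_span_sup_sq_iff_sq_le_span_mul h3 hdim hf
      (notMem_maximalIdeal_sq_of_span_singleton_mul_eq h3 hf0 hm) hff).mpr hm.ge
    rw [← hm, sup_eq_left.mpr Ideal.mul_le_left] at hann
    refine hann.antisymm fun x hx ↦ ?_
    obtain ⟨a, rfl⟩ := Ideal.mem_span_singleton'.mp hx
    rw [mem_annihilator_span_singleton, smul_eq_mul, mul_assoc, hff, mul_zero]

end IsLocalRing

theorem exact_pair_self_iff_conca_generator_general
    (Q : Type) [CommRing Q] [IsLocalRing Q]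
    (h3 : maximalIdeal Q ^ 3 = ⊥)
    (e : ℕ) (he : hilbCoeff Q 1 = e) (h2 : hilbCoeff Q 2 = ((e - 1 : ℕ) : ℕ∞))
    (f : Q) :
    (f ≠ 0 ∧ ∀ x : Q, x * f = 0 ↔ x ∈ Ideal.span {f}) ↔
      (f ≠ 0 ∧ f ^ 2 = 0 ∧ Ideal.span {f} * maximalIdeal Q = maximalIdeal Q ^ 2) := by
  have hrank1 := rank_gradedPiece_eq_of_hilbCoeff_eq he
  have hrank2 := rank_gradedPiece_eq_of_hilbCoeff_eq h2
  have := FiniteDimensional.of_rank_eq_nat hrank1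
  have := FiniteDimensional.of_rank_eq_nat hrank2
  have hdim : finrank (ResidueField Q) ((maximalIdeal Q).GradedPiece 2) =
      finrank (ResidueField Q) ((maximalIdeal Q).GradedPiece 1) - 1 := by
    rw [finrank_eq_of_rank_eq hrank1, finrank_eq_of_rank_eq hrank2]
  have hexact : (∀ x : Q, x * f = 0 ↔ x ∈ Ideal.span {f}) ↔
      (Ideal.span {f}).annihilator = Ideal.span {f} := by
    simp only [SetLike.ext_iff, mem_annihilator_span_singleton, smul_eq_mul]
  rw [hexact]
  exact and_congr_right (annihilator_span_singleton_eq_self_iff h3 hdim)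

/-- Let `(Q,𝔪,k)` be a local Artinian ring with `𝔪³ = 0` whose Hilbert series is
`1 + e t + (e-1) t²`, where `e` is the minimal number of generators of `𝔪`.  Then for a
nonzero `f ∈ Q`, the pair `(f,f)` is an exact pair of zero divisors (i.e. `ann(f) = (f)`)
if and only if `f` is a Conca generator, i.e. `f² = 0` and `f𝔪 = 𝔪²`. -/
theorem exact_pair_self_iff_conca_generator
    (Q : Type) [CommRing Q] [IsLocalRing Q] [IsArtinianRing Q]
    (h3 : maximalIdeal Q ^ 3 = ⊥)
    (e : ℕ) (he : hilbCoeff Q 1 = e) (h2 : hilbCoeff Q 2 = ((e - 1 : ℕ) : ℕ∞))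
    (f : Q) :
    (f ≠ 0 ∧ ∀ x : Q, x * f = 0 ↔ x ∈ Ideal.span {f}) ↔
      (f ≠ 0 ∧ f ^ 2 = 0 ∧ Ideal.span {f} * maximalIdeal Q = maximalIdeal Q ^ 2) :=
  exact_pair_self_iff_conca_generator_general Q h3 e he h2 f
end

section
/- Let (R, 𝔫, k) be a local ring with 𝔫² = 0, and let M, N be finitely generated R-modules with 𝔫(M ⊗_R N) = 0. Then for all i ≥ 0, the map Tor_i^R(M, ν_N) : Tor_i^R(M, 𝔫N) → Tor_i^R(M, N) induced by the inclusion ν_N : 𝔫N ↪ N is zero. -/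
open IsLocalRing CategoryTheory

set_option maxHeartbeats 800000 in
lemma aux_factor (R : Type) [CommRing R] [IsLocalRing R]
    (h2 : maximalIdeal R ^ 2 = ⊥)
    (N : Type) [AddCommGroup N] [Module R N] :
    ∃ (σ : ↥(maximalIdeal R • (⊤ : Submodule R N)) →ₗ[R] (N →₀ R)),
      (Finsupp.linearCombination R (id : N → N)) ∘ₗ σ
        = (maximalIdeal R • (⊤ : Submodule R N)).subtype := by
  classical
  set 𝔫 := maximalIdeal R with h𝔫
  set S : Submodule R N := 𝔫 • ⊤ with hS
  set π : (N →₀ R) →ₗ[R] N := Finsupp.linearCombination R (id : N → N) with hπ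
  have hπsurj : Function.Surjective π := Finsupp.linearCombination_id_surjective R N
  set P' : Submodule R (N →₀ R) := 𝔫 • ⊤ with hP'
  -- torsion facts
  have key : ∀ (L : Type) [AddCommGroup L] [Module R L], ∀ a ∈ 𝔫,
      ∀ x ∈ (𝔫 • ⊤ : Submodule R L), a • x = 0 := by
    intro L _ _ a ha x hx
    have : a • x ∈ (𝔫 • (𝔫 • ⊤) : Submodule R L) := Submodule.smul_mem_smul ha hx
    rwa [← Submodule.smul_assoc, smul_eq_mul, ← pow_two, h2, Submodule.bot_smul,
      Submodule.mem_bot] at this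
  have htorS : Module.IsTorsionBySet R ↥S (𝔫 : Set R) := fun x a =>
    Subtype.ext (key N a a.2 x x.2)
  have htorP' : Module.IsTorsionBySet R ↥P' (𝔫 : Set R) := fun x a =>
    Subtype.ext (key (N →₀ R) a a.2 x x.2)
  letI : Module (R ⧸ 𝔫) ↥S := htorS.module
  letI : Module (R ⧸ 𝔫) ↥P' := Module.IsTorsionBySet.module (R := R) (M := ↥P') (I := 𝔫) htorP'
  letI : Field (R ⧸ 𝔫) := Ideal.Quotient.field 𝔫
  -- restricted projection
  have hmap : ∀ x ∈ P', π x ∈ S := by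
    intro x hx
    have : π x ∈ (P'.map π) := Submodule.mem_map_of_mem hx
    rwa [hP', Submodule.map_smul'', Submodule.map_top,
      LinearMap.range_eq_top.2 hπsurj] at this
  set π' : ↥P' →ₗ[R] ↥S := π.restrict hmap with hπ'
  have hπ'surj : Function.Surjective π' := by
    rintro ⟨s, hs⟩
    have : s ∈ (P'.map π) := by
      rw [hP', Submodule.map_smul'', Submodule.map_top,
        LinearMap.range_eq_top.2 hπsurj]
      exact hs
    obtain ⟨x, hx, hxs⟩ := this
    exact ⟨⟨x, hx⟩, Subtype.ext hxs⟩
  set πk : ↥P' →ₗ[R ⧸ 𝔫] ↥S :=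
    { toFun := π'
      map_add' := fun x y => π'.map_add x y
      map_smul' := by
        intro c x
        obtain ⟨r, rfl⟩ := Ideal.Quotient.mk_surjective c
        exact π'.map_smul r x } with hπk
  obtain ⟨σk, hσk⟩ := Module.projective_lifting_property πk LinearMap.id
    (fun s => hπ'surj s)
  refine ⟨{ toFun := fun s => ((σk s : ↥P') : N →₀ R)
            map_add' := by intro x y; simp
            map_smul' := by
              intro r x
              exact congrArg Subtype.val
                (σk.map_smul (Ideal.Quotient.mk 𝔫 r) x) }, ?_⟩
  ext s
  have := congrArg (fun f => ((f s : ↥S) : N)) hσk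
  simp only [πk, π', LinearMap.restrict_apply] at this
  exact this

/-- Let `(R,𝔫,k)` be a Noetherian local ring with `𝔫² = 0`, and `M`, `N` finitely
generated `R`-modules with `𝔫(M ⊗_R N) = 0`.  Then for every `i`, the map
`Tor_i^R(M,ν_N) : Tor_i^R(M,𝔫N) → Tor_i^R(M,N)` induced by the inclusion
`ν_N : 𝔫N ↪ N` is zero. -/
theorem tor_map_inclusion_eq_zero
    (R : Type) [CommRing R] [IsLocalRing R] [IsNoetherianRing R]
    (h2 : maximalIdeal R ^ 2 = ⊥)
    (M N : Type) [AddCommGroup M] [Module R M] [AddCommGroup N] [Module R N]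
    [Module.Finite R M] [Module.Finite R N]
    (hMN : maximalIdeal R • (⊤ : Submodule R (TensorProduct R M N)) = ⊥) :
    ∀ i : ℕ,
      ((Tor (ModuleCat R) i).obj (ModuleCat.of R M)).map
        (ModuleCat.ofHom (maximalIdeal R • (⊤ : Submodule R N)).subtype) = 0 := by
  classical
  obtain ⟨σ, hσ⟩ := aux_factor R h2 N
  intro i
  match i with
  | 0 =>
    -- Tor₀ is tensoring, and the map `M ⊗ 𝔫N → M ⊗ N` is zero since `𝔫(M⊗N)=0`.
    set F := (MonoidalCategory.tensoringLeft (ModuleCat R)).obj (ModuleCat.of R M) with hF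
    haveI : Limits.PreservesColimits F := by
      show Limits.PreservesColimits (MonoidalCategory.tensorLeft (ModuleCat.of R M))
      infer_instance
    have hmapzero : F.map (ModuleCat.ofHom
        (maximalIdeal R • (⊤ : Submodule R N)).subtype) = 0 := by
      have hzero : ∀ n ∈ (maximalIdeal R • (⊤ : Submodule R N)), ∀ m : M,
          (m ⊗ₜ[R] n : TensorProduct R M N) = 0 := by
        intro n hn
        refine Submodule.smul_induction_on hn ?_ ?_
        · intro r hr x _ m
          have : r • (m ⊗ₜ[R] x : TensorProduct R M N)
              ∈ maximalIdeal R • (⊤ : Submodule R (TensorProduct R M N)) :=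
            Submodule.smul_mem_smul hr trivial
          rw [hMN, Submodule.mem_bot] at this
          rw [TensorProduct.tmul_smul]
          exact this
        · intro x y hx hy m
          rw [TensorProduct.tmul_add, hx, hy, add_zero]
      apply ModuleCat.hom_ext
      refine TensorProduct.ext' ?_
      intro m s
      show (MonoidalCategory.whiskerLeft (ModuleCat.of R M)
        (ModuleCat.ofHom (maximalIdeal R • (⊤ : Submodule R N)).subtype)).hom (m ⊗ₜ s) = 0
      rw [ModuleCat.MonoidalCategory.whiskerLeft_apply]
      exact hzero s.1 s.2 m
    have hnat := (Functor.fromLeftDerivedZero F).naturality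
      (ModuleCat.ofHom (maximalIdeal R • (⊤ : Submodule R N)).subtype)
    rw [hmapzero, Limits.comp_zero] at hnat
    have key : (F.leftDerived 0).map (ModuleCat.ofHom
        (maximalIdeal R • (⊤ : Submodule R N)).subtype) = 0 :=
      (cancel_mono ((Functor.fromLeftDerivedZero F).app (ModuleCat.of R N))).mp
        (by rw [hnat, Limits.zero_comp])
    exact key
  | (n+1) =>
    haveI : Projective (ModuleCat.of R (N →₀ R)) :=
      ModuleCat.projective_of_free Finsupp.basisSingleOne
    have hfact : ModuleCat.ofHom (maximalIdeal R • (⊤ : Submodule R N)).subtype =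
        ModuleCat.ofHom σ ≫ ModuleCat.ofHom (Finsupp.linearCombination R (id : N → N)) := by
      rw [← ModuleCat.ofHom_comp, hσ]
    rw [hfact, Functor.map_comp]
    have hz := isZero_Tor_succ_of_projective (C := ModuleCat R)
      (ModuleCat.of R M) (ModuleCat.of R (N →₀ R)) n
    rw [Limits.IsZero.eq_zero_of_tgt hz
      (((Tor (ModuleCat R) (n+1)).obj (ModuleCat.of R M)).map (ModuleCat.ofHom σ)),
      Limits.zero_comp]
end

section
/- Let Q be a local ring, f ∈ Q, R = Q/(f), and let (F, ∂) be a complex of finitely generated free R-modules with lifting (F̃, ∂̃) to Q (so F̃ ⊗_Q R = F and ∂̃ ⊗_Q R = ∂, and ∂̃² = f·τ̃ for some map τ̃ of degree -2). Set S = Q/((f) + ann_Q(f)) and τ = τ̃ ⊗_Q S. Then τ : F ⊗_R S → F ⊗_R S is a chain map of degree -2, i.e., τ∘(∂ ⊗ S) = (∂ ⊗ S)∘τ. -/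
/-!
Applying `∂̃` to `∂̃² = f·τ̃` on either side gives `f·(τ̃∂̃ - ∂̃τ̃) = ∂̃³ - ∂̃³ = 0`, so the
commutator takes values in the `f`-torsion of a free `Q`-module, and in a free module every
coordinate of an `f`-torsion element lies in `ann_Q(f)`.
-/

theorem Module.Free.mem_annihilator_smul_top_of_smul_eq_zero {R M : Type*} [CommRing R]
    [AddCommGroup M] [Module R M] [Module.Free R M] {f : R} {y : M} (hy : f • y = 0) :
    y ∈ (Ideal.span {f} : Submodule R R).annihilator • (⊤ : Submodule R M) := by
  let b := Module.Free.chooseBasis R M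
  have hcoord (i) : b.repr y i ∈ (Ideal.span {f} : Submodule R R).annihilator := by
    rw [Ideal.span, Submodule.mem_annihilator_span_singleton, smul_eq_mul, mul_comm]
    simpa using congrArg (b.repr · i) hy
  rw [← b.linearCombination_repr y, Finsupp.linearCombination_apply]
  exact Submodule.finsuppSum_mem _ _ _ _ fun i _ => Submodule.smul_mem_smul (hcoord i) trivial

theorem smul_sub_comp_eq_zero_of_comp_eq_smul {R A B C D : Type*} [CommRing R]
    [AddCommGroup A] [Module R A] [AddCommGroup B] [Module R B] [AddCommGroup C] [Module R C]
    [AddCommGroup D] [Module R D] {f : R} {d₁ : A →ₗ[R] B} {d₂ : B →ₗ[R] C} {d₃ : C →ₗ[R] D}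
    {τ₁ : A →ₗ[R] C} {τ₂ : B →ₗ[R] D} (h₁ : ∀ x, d₂ (d₁ x) = f • τ₁ x)
    (h₂ : ∀ x, d₃ (d₂ x) = f • τ₂ x) (x : A) :
    f • (τ₂ (d₁ x) - d₃ (τ₁ x)) = 0 := by
  rw [smul_sub, ← h₂, ← map_smul, ← h₁, sub_self]

theorem eisenbud_operator_is_chain_map_general
    (Q : Type) [CommRing Q] (f : Q)
    (G : ℤ → Type) [∀ n, AddCommGroup (G n)] [∀ n, Module Q (G n)]
    [∀ n, Module.Free Q (G n)]
    (d : ∀ i j : ℤ, G i →ₗ[Q] G j)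
    (τ : ∀ i j : ℤ, G i →ₗ[Q] G j)
    (hd2 : ∀ (n : ℤ) (x : G n), d (n - 1) (n - 2) (d n (n - 1) x) = f • τ n (n - 2) x) :
    ∀ (n : ℤ) (x : G n),
      τ (n - 1) (n - 3) (d n (n - 1) x) - d (n - 2) (n - 3) (τ n (n - 2) x) ∈
        ((Ideal.span {f} ⊔ (Ideal.span {f} : Submodule Q Q).annihilator) •
          (⊤ : Submodule Q (G (n - 3)))) := by
  intro n x
  have hd2' (y : G (n - 1)) :
      d (n - 2) (n - 3) (d (n - 1) (n - 2) y) = f • τ (n - 1) (n - 3) y := by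
    have h := hd2 (n - 1) y
    rwa [show n - 1 - 1 = n - 2 by ring, show n - 1 - 2 = n - 3 by ring] at h
  have htorsion := smul_sub_comp_eq_zero_of_comp_eq_smul (hd2 n) hd2' x
  exact Submodule.smul_mono_left le_sup_right
    (Module.Free.mem_annihilator_smul_top_of_smul_eq_zero htorsion)

/-- **The Eisenbud operator is a chain map.**
Let `Q` be a local ring, `f ∈ Q`, `R = Q/(f)`.  Let `F` be a complex of finitely
generated free `R`-modules with lifting `(F̃, ∂̃)` to `Q` (the lifting is given by free
`Q`-modules `G n` and `Q`-linear maps `d i j : G i → G j`, the differential being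
`d n (n-1)`), so that `∂̃² = f·τ̃` for a degree `-2` map `τ̃` (given by `τ n (n-2)`).
With `S = Q/((f) + ann_Q(f))`, the induced map `τ = τ̃ ⊗_Q S` on `F ⊗_R S` is a chain
map of degree `-2`: equivalently `τ̃∘∂̃ - ∂̃∘τ̃` takes values in `((f) + ann_Q(f))·F̃`. -/
theorem eisenbud_operator_is_chain_map
    (Q : Type) [CommRing Q] [IsLocalRing Q] (f : Q)
    (G : ℤ → Type) [∀ n, AddCommGroup (G n)] [∀ n, Module Q (G n)]
    [∀ n, Module.Free Q (G n)] [∀ n, Module.Finite Q (G n)]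
    (d : ∀ i j : ℤ, G i →ₗ[Q] G j)
    (τ : ∀ i j : ℤ, G i →ₗ[Q] G j)
    (hd2 : ∀ (n : ℤ) (x : G n), d (n - 1) (n - 2) (d n (n - 1) x) = f • τ n (n - 2) x) :
    ∀ (n : ℤ) (x : G n),
      τ (n - 1) (n - 3) (d n (n - 1) x) - d (n - 2) (n - 3) (τ n (n - 2) x) ∈
        ((Ideal.span {f} ⊔ (Ideal.span {f} : Submodule Q Q).annihilator) •
          (⊤ : Submodule Q (G (n - 3)))) :=
  eisenbud_operator_is_chain_map_general Q f G d τ hd2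
end

section
/- With Q local, f ∈ Q, R = Q/(f), S = Q/((f)+ann_Q(f)): if h : F → F' is a degree-0 chain map between complexes of free R-modules with liftings F̃, F̃' to Q, and τ, τ' are the corresponding Eisenbud operators (defined by ∂̃² = fτ̃, ∂̃'² = fτ̃', and tensoring with S), then τ'∘(h ⊗_Q S) is chain homotopic to (h ⊗_Q S)∘τ. In particular, the Eisenbud operator is independent of the choice of lifting up to homotopy. -/
lemma eisenbud_aux_mem {Q M : Type} [CommRing Q] [AddCommGroup M] [Module Q M]
    [Module.Free Q M] (f : Q) (z : M) (hz : f • z = 0) :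
    z ∈ ((Ideal.span {f} ⊔ (Ideal.span {f} : Submodule Q Q).annihilator) •
      (⊤ : Submodule Q M)) := by
  obtain ⟨I, b⟩ := Module.Free.exists_basis (R := Q) (M := M)
  have hz2 : z = Finsupp.linearCombination Q b (b.repr z) := (b.linearCombination_repr z).symm
  rw [hz2, Finsupp.linearCombination_apply, Finsupp.sum]
  refine Submodule.sum_mem _ fun i _ => Submodule.smul_mem_smul ?_ trivial
  refine Submodule.mem_sup_right ?_
  rw [Ideal.span, Submodule.mem_annihilator_span_singleton]
  have : b.repr (f • z) i = 0 := by rw [hz]; simp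
  rw [map_smul] at this
  simpa [smul_eq_mul, mul_comm] using this

/-- **Naturality of the Eisenbud operator up to homotopy.**
Let `Q` be a local ring, `f ∈ Q`, `R = Q/(f)` and `S = Q/((f) + ann_Q(f))`.  Let `h` be
a degree-`0` chain map between complexes of free `R`-modules, with liftings `(G, d)` and
`(G', d')` to `Q` and Eisenbud operators `τ`, `τ'` (so `∂̃² = f·τ̃` and `∂̃'² = f·τ̃'`).
A lifting `h̃` of `h` satisfies `∂̃'∘h̃ - h̃∘∂̃ = f·α` for some degree `-1` map `α`.
Then `τ'∘(h ⊗ S)` is chain homotopic to `(h ⊗ S)∘τ`: there is a degree `-1` family `σ`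
with `τ̃'∘h̃ - h̃∘τ̃ - (∂̃'∘σ + σ∘∂̃)` taking values in `((f) + ann_Q(f))·G'`.
In particular (taking `h = id`), the Eisenbud operator is independent of the choice of
the lifting up to homotopy. -/
theorem eisenbud_operator_natural_up_to_homotopy
    (Q : Type) [CommRing Q] [IsLocalRing Q] (f : Q)
    (G G' : ℤ → Type) [∀ n, AddCommGroup (G n)] [∀ n, Module Q (G n)]
    [∀ n, Module.Free Q (G n)] [∀ n, Module.Finite Q (G n)]
    [∀ n, AddCommGroup (G' n)] [∀ n, Module Q (G' n)]
    [∀ n, Module.Free Q (G' n)] [∀ n, Module.Finite Q (G' n)]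
    (d : ∀ i j : ℤ, G i →ₗ[Q] G j) (d' : ∀ i j : ℤ, G' i →ₗ[Q] G' j)
    (τ : ∀ i j : ℤ, G i →ₗ[Q] G j) (τ' : ∀ i j : ℤ, G' i →ₗ[Q] G' j)
    (hd2 : ∀ (n : ℤ) (x : G n), d (n - 1) (n - 2) (d n (n - 1) x) = f • τ n (n - 2) x)
    (hd2' : ∀ (n : ℤ) (x : G' n), d' (n - 1) (n - 2) (d' n (n - 1) x) = f • τ' n (n - 2) x)
    (h : ∀ n : ℤ, G n →ₗ[Q] G' n)
    (α : ∀ i j : ℤ, G i →ₗ[Q] G' j)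
    (hh : ∀ (n : ℤ) (x : G n),
      d' n (n - 1) (h n x) - h (n - 1) (d n (n - 1) x) = f • α n (n - 1) x) :
    ∃ σ : ∀ i j : ℤ, G i →ₗ[Q] G' j,
      ∀ (n : ℤ) (x : G n),
        τ' n (n - 2) (h n x) - h (n - 2) (τ n (n - 2) x) -
            (d' (n - 1) (n - 2) (σ n (n - 1) x) + σ (n - 1) (n - 2) (d n (n - 1) x)) ∈
          ((Ideal.span {f} ⊔ (Ideal.span {f} : Submodule Q Q).annihilator) •
            (⊤ : Submodule Q (G' (n - 2)))) := by
  refine ⟨α, fun n x => ?_⟩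
  have hidx : (n : ℤ) - 1 - 1 = n - 2 := by ring
  have e1 := hd2' n (h n x)
  have e3 := hh (n - 1) (d n (n - 1) x)
  rw [hidx] at e3
  have hA : d' (n-1) (n-2) (d' n (n-1) (h n x))
      - d' (n-1) (n-2) (h (n-1) (d n (n-1) x))
      = f • d' (n-1) (n-2) (α n (n-1) x) := by
    rw [← map_sub, hh n x, map_smul]
  have hD : h (n-2) (d (n-1) (n-2) (d n (n-1) x)) = f • h (n-2) (τ n (n-2) x) := by
    rw [hd2 n x, map_smul]
  apply eisenbud_aux_mem f
  rw [smul_sub, smul_sub, smul_add, ← e1, ← hD, ← hA, ← e3]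
  abel
end

section
/- Let (Q, 𝔪, k) be a local ring with residue field of characteristic zero, (f, g) an exact pair of zero divisors, R = Q/(f), S = Q/(f, g). Let M be an R-module with free resolution U over Q that is a semi-free dg module over the Tate resolution A = Q⟨y, t | ∂y = f, ∂t = gy⟩ of R, and let W be the mapping cone of the Eisenbud operator τ on U' ⊗_R S. Then multiplication by t (the degree-2 divided power variable) induces a short exact sequence of complexes of S-modules 0 → Σ²(U ⊗_Q S) → U ⊗_Q S → W → 0. -/
open IsLocalRing DirectSum

section

variable (Q : Type) [CommRing Q]
variable (V : ℤ → Type) [∀ n, AddCommGroup (V n)] [∀ n, Module Q (V n)]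

/-- Cast between the members of a family of modules along an equality of indices. -/
def vcast {m m' : ℤ} (h : m = m') : V m →ₗ[Q] V m' := by subst h; exact LinearMap.id

/-- The underlying graded module of a semi-free dg module `U` over the Tate resolution
`A = Q⟨y,t | ∂y = f, ∂t = gy⟩` of `R = Q/(f)` with semi-basis `V`:
`U n = ⊕_{i ∈ ℕ} y_i V_{n-i}`, the `i`-th summand corresponding to `y_i V_{n-i}`
(where `y_{2a} = t^{(a)}` and `y_{2a+1} = t^{(a)} y`). -/
abbrev smod (n : ℤ) : Type := ⨁ (i : ℕ), V (n - (i : ℤ))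

/-- Inclusion of the `i`-th summand `y_i V_{n-i}` of `U n`. -/
noncomputable def lofU (n : ℤ) (i : ℕ) : V (n - i) →ₗ[Q] smod V n :=
  DirectSum.lof Q ℕ (fun i => V (n - i)) i

/-- Projection onto the `i`-th summand `y_i V_{n-i}` of `U n`. -/
noncomputable def compU (n : ℤ) (i : ℕ) : smod V n →ₗ[Q] V (n - i) :=
  DirectSum.component Q ℕ (fun i => V (n - i)) i

/-- Multiplication by the degree-one exterior variable `y`:
`y · (y_{2a} v) = y_{2a+1} v` and `y · (y_{2a+1} v) = 0`. -/
noncomputable def mulY (n : ℤ) : smod V n →ₗ[Q] smod V (n + 1) :=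
  DirectSum.toModule Q ℕ _ fun i =>
    if i % 2 = 0 then
      (lofU Q V (n + 1) (i + 1)).comp
        (vcast Q V (show n - (i : ℤ) = (n + 1) - ((i + 1 : ℕ) : ℤ) by push_cast; ring))
    else 0

/-- Multiplication by the degree-two divided-power variable `t = y₂`:
`y₂ · (y_{2a+ε} v) = (a+1) · y_{2a+2+ε} v` for `ε ∈ {0,1}`. -/
noncomputable def mulT (n : ℤ) : smod V n →ₗ[Q] smod V (n + 2) :=
  DirectSum.toModule Q ℕ _ fun i =>
    (i / 2 + 1 : ℕ) •
      ((lofU Q V (n + 2) (i + 2)).comp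
        (vcast Q V (show n - (i : ℤ) = (n + 2) - ((i + 2 : ℕ) : ℤ) by push_cast; ring)))

/-- Cast between graded pieces of `U` along an equality of degrees. -/
noncomputable def ucast {m m' : ℤ} (h : m = m') : smod V m →ₗ[Q] smod V m' := by
  subst h; exact LinearMap.id

/-- Multiplication by `y₂`, as a map `U (n-2) → U n`. -/
noncomputable def mulT' (n : ℤ) : smod V (n - 2) →ₗ[Q] smod V n :=
  (ucast Q V (show n - 2 + 2 = n by ring)).comp (mulT Q V (n - 2))

/-- Inclusion `V n = y₀ V_n ⊆ U n` of the semi-basis component. -/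
noncomputable def iotaV (n : ℤ) : V n →ₗ[Q] smod V n :=
  (lofU Q V n 0).comp (vcast Q V (show (n : ℤ) = n - ((0 : ℕ) : ℤ) by push_cast; ring))

/-- The `n`-th term `V_{n-1} ⊕ V_n` of the mapping cone `W` of the Eisenbud operator. -/
abbrev cone (n : ℤ) : Type := V (n - 1) × V n

variable (d : ∀ i j : ℤ, smod V i →ₗ[Q] smod V j)

/-- The differential of the mapping cone `W` of the Eisenbud operator `τ`
(cf. Lemma `taudesc`): `∂^W (x, a) = (a_{n-2} - x_{n-2}, a_{n-1})`, where for `v ∈ V_m`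
the element `v_j` denotes the component of `∂v` in `y_{m-j} V_j`. -/
noncomputable def coneD (n : ℤ) : cone V n →ₗ[Q] cone V (n - 1) :=
  LinearMap.prod
    (((vcast Q V (show (n - 1) - ((1 : ℕ) : ℤ) = n - 1 - 1 by push_cast; ring)).comp
        ((compU Q V (n - 1) 1).comp ((d n (n - 1)).comp (iotaV Q V n)))).comp
        (LinearMap.snd Q (V (n - 1)) (V n)) -
      ((vcast Q V (show (n - 2) - ((0 : ℕ) : ℤ) = n - 1 - 1 by push_cast; ring)).comp
        ((compU Q V (n - 2) 0).comp ((d (n - 1) (n - 2)).comp (iotaV Q V (n - 1))))).comp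
        (LinearMap.fst Q (V (n - 1)) (V n)))
    (((vcast Q V (show (n - 1) - ((0 : ℕ) : ℤ) = n - 1 by push_cast; ring)).comp
        ((compU Q V (n - 1) 0).comp ((d n (n - 1)).comp (iotaV Q V n)))).comp
        (LinearMap.snd Q (V (n - 1)) (V n)))

/-- The map `ω : U ⊗ S → W`, `ω(u) = (x, a)` where `u = a + y x + l` with `a ∈ V_n`,
`x ∈ V_{n-1}`, `l ∈ L_n = ⊕_{i≥2} y_i V_{n-i}`. -/
noncomputable def omegaMap (n : ℤ) : smod V n →ₗ[Q] cone V n :=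
  LinearMap.prod
    ((vcast Q V (show n - ((1 : ℕ) : ℤ) = n - 1 by push_cast; ring)).comp (compU Q V n 1))
    ((vcast Q V (show n - ((0 : ℕ) : ℤ) = n by push_cast; ring)).comp (compU Q V n 0))

/-!
Write `U_n = V_n ⊕ y V_{n-1} ⊕ L_n` with `L_n = ⊕_{i ≥ 2} y_i V_{n-i}`. Multiplication by
`t` sends `y_j V` to `y_{j+2} V` with coefficient `⌊j/2⌋ + 1`, a unit because the residue field
has characteristic zero; so `·t` is an isomorphism `U_{n-2} ≅ L_n` and `ω` is the projection
onto `V_n ⊕ y V_{n-1}`. This gives injectivity, exactness and surjectivity already before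
reducing modulo `J = (f, g)`. The Leibniz rule `∂(t u) = g y u + t ∂u` makes `·t` a chain map
modulo `g`. Applying `∂` to it and using `∂² = 0` gives `g (∂(y u) + y ∂u) = 0`; as `U` is free
and `ann g = (f)`, `∂` anticommutes with `y` modulo `f`, which is what makes `ω` commute with
the cone differential `∂^W (x, a) = ω (∂a - y ∂x)`.
-/

theorem LinearMap.map_mem_smul_top {R M N : Type*} [CommRing R] [AddCommGroup M] [Module R M]
    [AddCommGroup N] [Module R N] (L : M →ₗ[R] N) {I : Ideal R} {x : M}
    (hx : x ∈ I • (⊤ : Submodule R M)) : L x ∈ I • (⊤ : Submodule R N) :=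
  Submodule.smul_top_le_comap_smul_top I L hx

theorem mem_smul_top_of_smul_eq_zero {R M : Type*} [CommRing R] [AddCommGroup M] [Module R M]
    [Module.Free R M] {I : Ideal R} {g : R} (hI : ∀ c : R, c * g = 0 → c ∈ I) {x : M}
    (hx : g • x = 0) : x ∈ I • (⊤ : Submodule R M) := by
  classical
  let b := Module.Free.chooseBasis R M
  have hcoeff : ∀ i, b.repr x i ∈ I := fun i =>
    hI _ (by simpa [mul_comm] using congrArg (fun y => b.repr y i) hx)
  rw [← b.linearCombination_repr x, Finsupp.linearCombination_apply, Finsupp.sum]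
  exact Submodule.sum_mem _ fun i _ => Submodule.smul_mem_smul (hcoeff i) trivial

theorem IsLocalRing.isUnit_natCast {R : Type*} [CommRing R] [IsLocalRing R]
    [CharZero (ResidueField R)] {m : ℕ} (hm : m ≠ 0) : IsUnit (m : R) := by
  rw [← residue_ne_zero_iff_isUnit, map_natCast]
  exact_mod_cast hm

/-- The inverse of `mulT'` on `L_n = ⊕_{i ≥ 2} y_i V_{n-i}`, zero on `V_n ⊕ y V_{n-1}`. -/
noncomputable def divT (n : ℤ) : smod V n →ₗ[Q] smod V (n - 2) :=
  DirectSum.toModule Q ℕ _ fun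
    | 0 => 0
    | 1 => 0
    | j + 2 => Ring.inverse ((j / 2 + 1 : ℕ) : Q) •
        (lofU Q V (n - 2) j).comp (vcast Q V (by push_cast; ring))

def IsDifferential : Prop :=
  ∀ (n : ℤ) (u : smod V n), d (n - 1) (n - 2) (d n (n - 1) u) = 0

def TLeibnizRule (g : Q) : Prop :=
  ∀ (n : ℤ) (u : smod V n), d (n + 2) (n + 1) (mulT Q V n u) =
    g • mulY Q V n u +
      ucast Q V (show n - 1 + 2 = n + 1 by ring) (mulT Q V (n - 1) (d n (n - 1) u))

noncomputable def omegaSection (n : ℤ) : cone V n →ₗ[Q] smod V n :=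
  (lofU Q V n 1).comp ((vcast Q V (by push_cast; ring)).comp (LinearMap.fst Q _ _)) +
    (iotaV Q V n).comp (LinearMap.snd Q _ _)

section

variable {Q V}

theorem vcast_vcast {m m' m'' : ℤ} (h : m = m') (h' : m' = m'') (x : V m) :
    vcast Q V h' (vcast Q V h x) = vcast Q V (h.trans h') x := by
  subst h h'; rfl

theorem vcast_rfl {m : ℤ} (h : m = m) (x : V m) : vcast Q V h x = x := rfl

theorem ucast_ucast {m m' m'' : ℤ} (h : m = m') (h' : m' = m'') (x : smod V m) :
    ucast Q V h' (ucast Q V h x) = ucast Q V (h.trans h') x := by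
  subst h h'; rfl

theorem compU_ucast {m m' : ℤ} (h : m = m') (j : ℕ) (x : smod V m) :
    compU Q V m' j (ucast Q V h x) = vcast Q V (by rw [h]) (compU Q V m j x) := by
  subst h; rfl

theorem ucast_lofU {m m' : ℤ} (h : m = m') (i : ℕ) (x : V (m - i)) :
    ucast Q V h (lofU Q V m i x) = lofU Q V m' i (vcast Q V (by rw [h]) x) := by
  subst h; rfl

theorem mulT_ucast {m m' : ℤ} (h : m = m') (x : smod V m) :
    mulT Q V m' (ucast Q V h x) = ucast Q V (by rw [h]) (mulT Q V m x) := by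
  subst h; rfl

theorem d_ucast (d : ∀ i j : ℤ, smod V i →ₗ[Q] smod V j) {i i' j : ℤ} (h : i = i')
    (x : smod V i) : d i' j (ucast Q V h x) = d i j x := by
  subst h; rfl

theorem d_eq_ucast_d (d : ∀ i j : ℤ, smod V i →ₗ[Q] smod V j) {i j j' : ℤ} (h : j = j')
    (x : smod V i) : d i j' x = ucast Q V h (d i j x) := by
  subst h; rfl

theorem compU_lofU_self (n : ℤ) (i : ℕ) (x : V (n - i)) : compU Q V n i (lofU Q V n i x) = x :=
  DirectSum.component.lof_self (R := Q) (ι := ℕ) (M := fun i => V (n - i)) i x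

theorem compU_lofU_of_ne (n : ℤ) {i j : ℕ} (hij : i ≠ j) (x : V (n - i)) :
    compU Q V n j (lofU Q V n i x) = 0 := by
  rw [compU, lofU, DirectSum.component.of, dif_neg hij]

theorem mulT_lofU (n : ℤ) (i : ℕ) (x : V (n - i)) :
    mulT Q V n (lofU Q V n i x) =
      (i / 2 + 1 : ℕ) • lofU Q V (n + 2) (i + 2) (vcast Q V (by push_cast; ring) x) := by
  rw [mulT, lofU, DirectSum.toModule_lof]; rfl

theorem mulY_lofU_of_even (n : ℤ) {i : ℕ} (h : i % 2 = 0) (x : V (n - i)) :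
    mulY Q V n (lofU Q V n i x) = lofU Q V (n + 1) (i + 1) (vcast Q V (by push_cast; ring) x) := by
  rw [mulY, lofU, DirectSum.toModule_lof, if_pos h]; rfl

theorem mulY_lofU_of_odd (n : ℤ) {i : ℕ} (h : i % 2 = 1) (x : V (n - i)) :
    mulY Q V n (lofU Q V n i x) = 0 := by
  rw [mulY, lofU, DirectSum.toModule_lof, if_neg (by omega)]; rfl

theorem smod_hom_ext {N : Type*} [AddCommGroup N] [Module Q N] {n : ℤ}
    {φ ψ : smod V n →ₗ[Q] N} (h : ∀ i x, φ (lofU Q V n i x) = ψ (lofU Q V n i x)) :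
    φ = ψ :=
  DirectSum.linearMap_ext Q fun i => LinearMap.ext (h i)

theorem compU_zero_mulY (n : ℤ) (u : smod V n) : compU Q V (n + 1) 0 (mulY Q V n u) = 0 := by
  suffices (compU Q V (n + 1) 0).comp (mulY Q V n) = 0 from LinearMap.congr_fun this u
  refine smod_hom_ext fun i x => ?_
  rcases Nat.mod_two_eq_zero_or_one i with h | h
  · simp only [LinearMap.comp_apply, mulY_lofU_of_even n h,
      compU_lofU_of_ne _ (by omega : i + 1 ≠ 0), LinearMap.zero_apply]
  · simp only [LinearMap.comp_apply, mulY_lofU_of_odd n h, map_zero, LinearMap.zero_apply]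

theorem compU_one_mulY (n : ℤ) (u : smod V n) :
    compU Q V (n + 1) 1 (mulY Q V n u) = vcast Q V (by push_cast; ring) (compU Q V n 0 u) := by
  suffices (compU Q V (n + 1) 1).comp (mulY Q V n) =
      (vcast Q V (by push_cast; ring)).comp (compU Q V n 0) from LinearMap.congr_fun this u
  refine smod_hom_ext fun i x => ?_
  simp only [LinearMap.comp_apply]
  rcases eq_or_ne i 0 with rfl | hi
  · rw [mulY_lofU_of_even n rfl, compU_lofU_self, compU_lofU_self]
  rw [compU_lofU_of_ne _ hi, map_zero]
  rcases Nat.mod_two_eq_zero_or_one i with h | h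
  · rw [mulY_lofU_of_even n h, compU_lofU_of_ne _ (by omega)]
  · rw [mulY_lofU_of_odd n h, map_zero]

theorem omegaMap_lofU_zero (n : ℤ) (x : V (n - ((0 : ℕ) : ℤ))) :
    omegaMap Q V n (lofU Q V n 0 x) = (0, vcast Q V (by push_cast; ring) x) := by
  simp [omegaMap, compU_lofU_self, compU_lofU_of_ne]

theorem omegaMap_lofU_one (n : ℤ) (x : V (n - ((1 : ℕ) : ℤ))) :
    omegaMap Q V n (lofU Q V n 1 x) = (vcast Q V (by push_cast; ring) x, 0) := by
  simp [omegaMap, compU_lofU_self, compU_lofU_of_ne]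

theorem omegaMap_lofU_add_two (n : ℤ) (j : ℕ) (x : V (n - ((j + 2 : ℕ) : ℤ))) :
    omegaMap Q V n (lofU Q V n (j + 2) x) = 0 := by
  simp [omegaMap, compU_lofU_of_ne]

theorem omegaMap_omegaSection (n : ℤ) (w : cone V n) :
    omegaMap Q V n (omegaSection Q V n w) = w := by
  simp [omegaSection, iotaV, omegaMap_lofU_zero, omegaMap_lofU_one, vcast_vcast, vcast_rfl]

theorem omegaMap_mulT' (n : ℤ) (v : smod V (n - 2)) : omegaMap Q V n (mulT' Q V n v) = 0 := by
  suffices (omegaMap Q V n).comp (mulT' Q V n) = 0 from LinearMap.congr_fun this v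
  refine smod_hom_ext fun i x => ?_
  simp [mulT', mulT_lofU, ucast_lofU, omegaMap_lofU_add_two]

theorem divT_lofU_zero (n : ℤ) (x : V (n - ((0 : ℕ) : ℤ))) :
    divT Q V n (lofU Q V n 0 x) = 0 := by
  rw [divT, lofU, DirectSum.toModule_lof]; rfl

theorem divT_lofU_one (n : ℤ) (x : V (n - ((1 : ℕ) : ℤ))) :
    divT Q V n (lofU Q V n 1 x) = 0 := by
  rw [divT, lofU, DirectSum.toModule_lof]; rfl

theorem divT_lofU_add_two (n : ℤ) (j : ℕ) (x : V (n - ((j + 2 : ℕ) : ℤ))) :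
    divT Q V n (lofU Q V n (j + 2) x) =
      Ring.inverse ((j / 2 + 1 : ℕ) : Q) •
        lofU Q V (n - 2) j (vcast Q V (by push_cast; ring) x) := by
  rw [divT, lofU, DirectSum.toModule_lof]; rfl

theorem mulT'_lofU (n : ℤ) (j : ℕ) (x : V (n - 2 - (j : ℤ))) :
    mulT' Q V n (lofU Q V (n - 2) j x) =
      ((j / 2 + 1 : ℕ) : Q) • lofU Q V n (j + 2) (vcast Q V (by push_cast; ring) x) := by
  rw [mulT', LinearMap.comp_apply, mulT_lofU, map_nsmul, ucast_lofU, vcast_vcast,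
    Nat.cast_smul_eq_nsmul]

theorem divT_mulT' [IsLocalRing Q] [CharZero (ResidueField Q)] (n : ℤ) (v : smod V (n - 2)) :
    divT Q V n (mulT' Q V n v) = v := by
  suffices (divT Q V n).comp (mulT' Q V n) = LinearMap.id from LinearMap.congr_fun this v
  refine smod_hom_ext fun j x => ?_
  have hc : IsUnit ((j / 2 + 1 : ℕ) : Q) := IsLocalRing.isUnit_natCast (by omega)
  rw [LinearMap.comp_apply, mulT'_lofU, map_smul, divT_lofU_add_two, smul_smul,
    Ring.mul_inverse_cancel _ hc, one_smul, vcast_vcast, vcast_rfl, LinearMap.id_apply]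

theorem mulT'_divT [IsLocalRing Q] [CharZero (ResidueField Q)] (n : ℤ) (u : smod V n) :
    mulT' Q V n (divT Q V n u) = u - omegaSection Q V n (omegaMap Q V n u) := by
  suffices (mulT' Q V n).comp (divT Q V n) =
      LinearMap.id - (omegaSection Q V n).comp (omegaMap Q V n) from LinearMap.congr_fun this u
  refine smod_hom_ext fun i x => ?_
  match i with
  | 0 => simp [divT_lofU_zero, omegaMap_lofU_zero, omegaSection, iotaV, vcast_vcast, vcast_rfl]
  | 1 => simp [divT_lofU_one, omegaMap_lofU_one, omegaSection, vcast_rfl]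
  | j + 2 =>
    have hc : IsUnit ((j / 2 + 1 : ℕ) : Q) := IsLocalRing.isUnit_natCast (by omega)
    rw [LinearMap.comp_apply, divT_lofU_add_two, map_smul, mulT'_lofU, smul_smul,
      Ring.inverse_mul_cancel _ hc, one_smul, vcast_vcast, vcast_rfl, LinearMap.sub_apply,
      LinearMap.comp_apply, omegaMap_lofU_add_two, map_zero, sub_zero, LinearMap.id_apply]

theorem omegaMap_ucast_mulY {k m : ℤ} (h : k + 1 = m) (z : smod V k) :
    omegaMap Q V m (ucast Q V h (mulY Q V k z)) =
      (vcast Q V (by rw [← h]; push_cast; ring) (compU Q V k 0 z), 0) := by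
  subst h
  ext
  · simp [omegaMap, compU_one_mulY, vcast_vcast, ucast]
  · simp [omegaMap, compU_zero_mulY, ucast]

theorem omegaSection_apply (n : ℤ) (x : V (n - 1)) (a : V n) :
    omegaSection Q V n (x, a) =
      ucast Q V (by ring) (mulY Q V (n - 1) (iotaV Q V (n - 1) x)) + iotaV Q V n a := by
  simp [omegaSection, iotaV, mulY_lofU_of_even, ucast_lofU, vcast_vcast]

variable {d : ∀ i j : ℤ, smod V i →ₗ[Q] smod V j}

theorem coneD_eq (n : ℤ) (w : cone V n) :
    coneD Q V d n w =
      omegaMap Q V (n - 1) (d n (n - 1) (iotaV Q V n w.2)) -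
        omegaMap Q V (n - 1) (ucast Q V (by ring)
          (mulY Q V (n - 1 - 1) (d (n - 1) (n - 1 - 1) (iotaV Q V (n - 1) w.1)))) := by
  rw [omegaMap_ucast_mulY, d_eq_ucast_d d (show n - 2 = n - 1 - 1 by ring)]
  ext
  · simp [coneD, omegaMap, compU_ucast, vcast_vcast]
  · simp [coneD, omegaMap]

theorem d_d_eq_zero
    (hcomplex : IsDifferential Q V d)
    {i j k : ℤ} (hj : j = i - 1) (hk : k = i - 2) (u : smod V i) : d j k (d i j u) = 0 := by
  subst hj hk
  exact hcomplex i u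

variable {g : Q}

theorem d_mulT'
    (hLeib : TLeibnizRule Q V d g) (n : ℤ) (v : smod V (n - 2)) :
    d n (n - 1) (mulT' Q V n v) =
      mulT' Q V (n - 1) (d (n - 2) (n - 1 - 2) v) +
        g • ucast Q V (by ring) (mulY Q V (n - 2) v) := by
  rw [mulT', mulT', LinearMap.comp_apply, LinearMap.comp_apply, d_ucast,
    d_eq_ucast_d d (show n - 2 + 1 = n - 1 by ring), hLeib, map_add, map_smul, ucast_ucast,
    d_eq_ucast_d d (show n - 2 - 1 = n - 1 - 2 by ring) v, mulT_ucast, ucast_ucast, add_comm]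

theorem d_mulY_add_mulY_d_mem [∀ n, Module.Free Q (V n)] {I : Ideal Q}
    (hI : ∀ c : Q, c * g = 0 → c ∈ I)
    (hcomplex : IsDifferential Q V d)
    (hLeib : TLeibnizRule Q V d g) (n : ℤ) (u : smod V n) :
    d (n + 1) n (mulY Q V n u) + ucast Q V (by ring) (mulY Q V (n - 1) (d n (n - 1) u)) ∈
      I • (⊤ : Submodule Q (smod V n)) := by
  refine mem_smul_top_of_smul_eq_zero hI ?_
  have hdt : d (n - 1 + 2) n (mulT Q V (n - 1) (d n (n - 1) u)) =
      ucast Q V (by ring) (g • mulY Q V (n - 1) (d n (n - 1) u)) := by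
    rw [d_eq_ucast_d d (show n - 1 + 1 = n by ring), hLeib,
      d_d_eq_zero hcomplex (by ring) (by ring), map_zero, map_zero]
    exact congrArg _ (add_zero _)
  have hdd := d_d_eq_zero hcomplex (i := n + 2) (j := n + 1) (k := n) (by ring) (by ring)
    (mulT Q V n u)
  rw [hLeib, map_add, map_smul (d (n + 1) n), d_ucast, hdt, map_smul] at hdd
  rwa [smul_add]

theorem omegaMap_d_mulT'_mem {I : Ideal Q} (hg : g ∈ I)
    (hLeib : TLeibnizRule Q V d g) (n : ℤ) (v : smod V (n - 2)) :
    omegaMap Q V (n - 1) (d n (n - 1) (mulT' Q V n v)) ∈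
      I • (⊤ : Submodule Q (cone V (n - 1))) := by
  rw [d_mulT' hLeib, map_add, omegaMap_mulT', zero_add, map_smul]
  exact Submodule.smul_mem_smul hg trivial

theorem omegaMap_d_omegaSection_sub_coneD_mem [∀ n, Module.Free Q (V n)] {I : Ideal Q}
    (hI : ∀ c : Q, c * g = 0 → c ∈ I)
    (hcomplex : IsDifferential Q V d)
    (hLeib : TLeibnizRule Q V d g) (n : ℤ) (w : cone V n) :
    omegaMap Q V (n - 1) (d n (n - 1) (omegaSection Q V n w)) - coneD Q V d n w ∈
      I • (⊤ : Submodule Q (cone V (n - 1))) := by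
  convert (omegaMap Q V (n - 1)).map_mem_smul_top
    (d_mulY_add_mulY_d_mem hI hcomplex hLeib (n - 1) (iotaV Q V (n - 1) w.1)) using 1
  rw [omegaSection_apply, coneD_eq, map_add, map_add, map_add, d_ucast]
  abel

theorem omegaMap_d_sub_coneD_omegaMap_mem [IsLocalRing Q] [CharZero (ResidueField Q)]
    [∀ n, Module.Free Q (V n)] {I : Ideal Q} (hg : g ∈ I)
    (hI : ∀ c : Q, c * g = 0 → c ∈ I)
    (hcomplex : IsDifferential Q V d)
    (hLeib : TLeibnizRule Q V d g) (n : ℤ) (u : smod V n) :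
    omegaMap Q V (n - 1) (d n (n - 1) u) - coneD Q V d n (omegaMap Q V n u) ∈
      I • (⊤ : Submodule Q (cone V (n - 1))) := by
  obtain ⟨w, v, rfl⟩ : ∃ w v, u = omegaSection Q V n w + mulT' Q V n v :=
    ⟨omegaMap Q V n u, divT Q V n u, by rw [mulT'_divT, add_sub_cancel]⟩
  rw [map_add, map_add, map_add, omegaMap_mulT', add_zero, omegaMap_omegaSection,
    add_sub_right_comm]
  exact add_mem (omegaMap_d_omegaSection_sub_coneD_mem hI hcomplex hLeib n w)
    (omegaMap_d_mulT'_mem hg hLeib n v)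

end

/-- **Lemma 2.2: the short exact sequence `0 → Σ²(U ⊗ S) → U ⊗ S → W → 0`.**
Let `(Q,𝔪,k)` be a local ring whose residue field has characteristic zero, `(f,g)` an
exact pair of zero divisors, `R = Q/(f)`, `S = Q/(f,g)`.  Let `U` be a free resolution
of an `R`-module over `Q` which is a semi-free dg module over the Tate resolution
`A = Q⟨y,t⟩`, with semi-basis `V` (so `U n = ⊕ᵢ y_i V_{n-i}`, the differential `d`
satisfies `d² = 0` and the Leibniz rule `∂(t·u) = g·(y·u) + t·∂u`), and let `W` be the
mapping cone of the Eisenbud operator `τ`.  Then, working modulo `J·(-)` with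
`J = (f,g)` (i.e. after applying `- ⊗_Q S`), multiplication by `t = y₂` and the map `ω`
are chain maps fitting in a short exact sequence of complexes of `S`-modules
`0 → Σ²(U ⊗_Q S) →_{·y₂} U ⊗_Q S →_ω W → 0`. -/
theorem mapping_cone_short_exact_sequence
    [IsLocalRing Q] [CharZero (ResidueField Q)]
    (f g : Q)
    (hanng : ∀ x : Q, x * g = 0 ↔ x ∈ Ideal.span {f})
    [∀ n, Module.Free Q (V n)]
    (hcomplex : ∀ (n : ℤ) (u : smod V n), d (n - 1) (n - 2) (d n (n - 1) u) = 0)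
    (hLeib : ∀ (n : ℤ) (u : smod V n),
      d (n + 2) (n + 1) (mulT Q V n u) =
        g • mulY Q V n u +
          (ucast Q V (show n - 1 + 2 = n + 1 by ring)) (mulT Q V (n - 1) (d n (n - 1) u))) :
    -- `·y₂` is injective modulo `J`
    (∀ (n : ℤ) (u : smod V (n - 2)),
      mulT' Q V n u ∈ (Ideal.span {f, g} • (⊤ : Submodule Q (smod V n))) →
        u ∈ (Ideal.span {f, g} • (⊤ : Submodule Q (smod V (n - 2))))) ∧
    -- `·y₂` is a chain map modulo `J`
    (∀ (n : ℤ) (u : smod V (n - 2)),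
      d n (n - 1) (mulT' Q V n u) - mulT' Q V (n - 1) (d (n - 2) (n - 1 - 2) u) ∈
        (Ideal.span {f, g} • (⊤ : Submodule Q (smod V (n - 1))))) ∧
    -- exactness at `U ⊗ S`: `ker(ω) = im(·y₂)` modulo `J`
    (∀ (n : ℤ) (u : smod V n),
      omegaMap Q V n u ∈ (Ideal.span {f, g} • (⊤ : Submodule Q (cone V n))) ↔
        ∃ v : smod V (n - 2),
          u - mulT' Q V n v ∈ (Ideal.span {f, g} • (⊤ : Submodule Q (smod V n)))) ∧
    -- `ω` is surjective modulo `J`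
    (∀ (n : ℤ) (w : cone V n), ∃ u : smod V n,
      omegaMap Q V n u - w ∈ (Ideal.span {f, g} • (⊤ : Submodule Q (cone V n)))) ∧
    -- `ω` is a chain map modulo `J`
    (∀ (n : ℤ) (u : smod V n),
      omegaMap Q V (n - 1) (d n (n - 1) u) - coneD Q V d n (omegaMap Q V n u) ∈
        (Ideal.span {f, g} • (⊤ : Submodule Q (cone V (n - 1))))) := by
  have hgJ : g ∈ Ideal.span {f, g} := Ideal.subset_span (by simp)
  have hJ : ∀ c : Q, c * g = 0 → c ∈ Ideal.span {f, g} := fun c hc =>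
    Ideal.span_mono (by simp) ((hanng c).1 hc)
  refine ⟨fun n u hu => ?_, fun n u => ?_, fun n u => ⟨fun hu => ?_, fun ⟨v, hv⟩ => ?_⟩,
    fun n w => ⟨omegaSection Q V n w, ?_⟩,
    omegaMap_d_sub_coneD_omegaMap_mem hgJ hJ hcomplex hLeib⟩
  · simpa only [divT_mulT'] using (divT Q V n).map_mem_smul_top hu
  · rw [d_mulT' hLeib, add_sub_cancel_left]
    exact Submodule.smul_mem_smul hgJ trivial
  · refine ⟨divT Q V n u, ?_⟩
    rw [mulT'_divT, sub_sub_cancel]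
    exact (omegaSection Q V n).map_mem_smul_top hu
  · simpa only [map_sub, omegaMap_mulT', sub_zero] using (omegaMap Q V n).map_mem_smul_top hv
  · rw [omegaMap_omegaSection, sub_self]
    exact zero_mem _

end
end
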